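/- Let w ∈ S_n satisfy: w has full support, and w can be written as w = w_ℓ · w_1 ⋯ w_{k+1} where w_ℓ is a product of the k pairwise-commuting elements of D_L(w), each w_i lies in a parabolic subgroup W_{T_i} with the T_i consisting of consecutive simple reflections, and D_L(w) together with the T_i partition S. Then Supp(sw) ≠ S for every s ∈ D_L(w). -/

import Mathlib

/-!
Removing `s = s_i` from the commuting product `w_ℓ` writes `s w` as a product of simple
reflections other than `s_i`, so `s w` stabilises the initial segment `{0, …, i}`.
In `S_n` the length of a permutation is its number of inversions, hence `s_i` is never a left
descent of a permutation stabilising `{0, …, i}`; peeling off left descents, no reduced word of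
such a permutation contains `s_i`.
-/

open Equiv MulAction Pointwise

/-- The support of `w`: the set of simple reflection indices appearing in some
(equivalently, any) reduced word for `w`. -/
def CoxeterSystem.supp {B W : Type*} [Group W] {M : CoxeterMatrix B}
    (cs : CoxeterSystem M W) (w : W) : Set B :=
  { i | ∃ ω : List B, cs.IsReduced ω ∧ cs.wordProd ω = w ∧ i ∈ ω }

namespace Equiv.Perm

def inversions {n : ℕ} (u : Perm (Fin n)) : Finset (Fin n × Fin n) :=
  {p | p.1 < p.2 ∧ u p.2 < u p.1}

@[simp]
lemma mem_inversions {n : ℕ} {u : Perm (Fin n)} {p : Fin n × Fin n} :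
    p ∈ u.inversions ↔ p.1 < p.2 ∧ u p.2 < u p.1 := by
  simp [inversions]

@[simp]
lemma inversions_one {n : ℕ} : inversions (1 : Perm (Fin n)) = ∅ := by
  ext p
  simpa using fun h => h.le

variable {m : ℕ}

lemma swap_castSucc_succ_lt_iff {c : Fin m} {p q : Fin (m + 1)}
    (h₁ : ¬(p = c.castSucc ∧ q = c.succ)) (h₂ : ¬(p = c.succ ∧ q = c.castSucc)) :
    swap c.castSucc c.succ p < swap c.castSucc c.succ q ↔ p < q := by
  simp only [swap_apply_def]
  split_ifs <;>
    simp only [Fin.lt_def, Fin.ext_iff, Fin.val_castSucc, Fin.val_succ] at * <;>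
    omega

lemma inversions_swap_mul {c : Fin m} {u : Perm (Fin (m + 1))}
    (h : u⁻¹ c.castSucc < u⁻¹ c.succ) :
    (swap c.castSucc c.succ * u).inversions =
      insert (u⁻¹ c.castSucc, u⁻¹ c.succ) u.inversions := by
  set a := u⁻¹ c.castSucc
  set b := u⁻¹ c.succ
  have ha : u a = c.castSucc := u.apply_symm_apply _
  have hb : u b = c.succ := u.apply_symm_apply _
  clear_value a b
  ext ⟨x, y⟩
  simp only [mem_inversions, Finset.mem_insert, Prod.mk.injEq, Perm.mul_apply]
  by_cases hxy : x = a ∧ y = b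
  · obtain ⟨rfl, rfl⟩ := hxy
    simp [ha, hb, h]
  by_cases hyx : x = b ∧ y = a
  · obtain ⟨rfl, rfl⟩ := hyx
    simp [h.not_gt, h.ne']
  rw [swap_castSucc_succ_lt_iff]
  · simp [hxy]
  · rwa [← ha, ← hb, u.injective.eq_iff, u.injective.eq_iff, and_comm]
  · rwa [← ha, ← hb, u.injective.eq_iff, u.injective.eq_iff, and_comm]

lemma card_inversions_swap_mul_of_lt {c : Fin m} {u : Perm (Fin (m + 1))}
    (h : u⁻¹ c.castSucc < u⁻¹ c.succ) :
    (swap c.castSucc c.succ * u).inversions.card = u.inversions.card + 1 := by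
  rw [inversions_swap_mul h, Finset.card_insert_of_notMem]
  simp [Fin.castSucc_lt_succ.le]

lemma card_inversions_swap_mul_of_gt {c : Fin m} {u : Perm (Fin (m + 1))}
    (h : u⁻¹ c.succ < u⁻¹ c.castSucc) :
    (swap c.castSucc c.succ * u).inversions.card + 1 = u.inversions.card := by
  have h' : (swap c.castSucc c.succ * u)⁻¹ c.castSucc <
      (swap c.castSucc c.succ * u)⁻¹ c.succ := by
    simpa [mul_inv_rev] using h
  simpa using (card_inversions_swap_mul_of_lt h').symm

lemma card_inversions_swap_mul_le (c : Fin m) (u : Perm (Fin (m + 1))) :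
    (swap c.castSucc c.succ * u).inversions.card ≤ u.inversions.card + 1 := by
  rcases lt_or_gt_of_ne (u⁻¹.injective.ne (Fin.castSucc_lt_succ (i := c)).ne) with h | h
  · exact (card_inversions_swap_mul_of_lt h).le
  · have := card_inversions_swap_mul_of_gt h
    omega

lemma exists_inv_apply_succ_lt_of_ne_one {u : Perm (Fin (m + 1))} (hu : u ≠ 1) :
    ∃ c : Fin m, u⁻¹ c.succ < u⁻¹ c.castSucc := by
  have hmono : ¬StrictMono ⇑u⁻¹ := fun h =>
    hu (inv_eq_one.mp (Equiv.ext (congrFun h.eq_id)))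
  simp only [Fin.strictMono_iff_lt_succ, not_forall, not_lt] at hmono
  obtain ⟨c, hc⟩ := hmono
  exact ⟨c, hc.lt_of_ne (u⁻¹.injective.ne (Fin.castSucc_lt_succ (i := c)).ne')⟩

end Equiv.Perm

namespace CoxeterSystem

section General

variable {B W : Type*} [Group W] {M : CoxeterMatrix B} (cs : CoxeterSystem M W)

lemma wordProd_mem_closure_simple_image {J : Set B} {ω : List B} (hω : ∀ j ∈ ω, j ∈ J) :
    cs.wordProd ω ∈ Subgroup.closure (cs.simple '' J) :=
  list_prod_mem (by
    simpa using fun j hj => Subgroup.subset_closure (Set.mem_image_of_mem _ (hω j hj)))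

lemma wordProd_eq_simple_mul_wordProd_erase [DecidableEq B] {ω : List B} {i : B} (hi : i ∈ ω)
    (hcomm : ∀ j ∈ ω, ∀ j' ∈ ω, Commute (cs.simple j) (cs.simple j')) :
    cs.wordProd ω = cs.simple i * cs.wordProd (ω.erase i) := by
  have hpair : (ω.map cs.simple).Pairwise Commute :=
    List.pairwise_map.2 (List.pairwise_of_forall_mem_list hcomm)
  simpa [wordProd] using ((List.perm_cons_erase hi).map cs.simple).prod_eq' hpair

lemma isLeftDescent_wordProd_cons {ω : List B} {i : B} (hω : cs.IsReduced (i :: ω)) :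
    cs.IsLeftDescent (cs.wordProd (i :: ω)) i := by
  rw [IsLeftDescent, hω, wordProd_cons, simple_mul_simple_cancel_left]
  exact (cs.length_wordProd_le ω).trans_lt (by simp)

end General

variable {m : ℕ} {cs : CoxeterSystem (CoxeterMatrix.A m) (Perm (Fin (m + 1)))}

lemma card_inversions_wordProd_le
    (hsimple : ∀ i : Fin m, cs.simple i = swap i.castSucc i.succ) (ω : List (Fin m)) :
    (cs.wordProd ω).inversions.card ≤ ω.length := by
  induction ω with
  | nil => simp
  | cons j ω ih =>
    rw [wordProd_cons, hsimple, List.length_cons]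
    exact (Perm.card_inversions_swap_mul_le j _).trans (by omega)

lemma length_le_card_inversions
    (hsimple : ∀ i : Fin m, cs.simple i = swap i.castSucc i.succ) (u : Perm (Fin (m + 1))) :
    cs.length u ≤ u.inversions.card := by
  induction h : u.inversions.card using Nat.strong_induction_on generalizing u with
  | _ n ih =>
    rcases eq_or_ne u 1 with rfl | hu
    · simp
    obtain ⟨c, hc⟩ := Perm.exists_inv_apply_succ_lt_of_ne_one hu
    have hcard := Perm.card_inversions_swap_mul_of_gt hc
    rw [← hsimple] at hcard
    have hlen := ih _ (by omega) (cs.simple c * u) rfl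
    calc cs.length u = cs.length (cs.simple c * (cs.simple c * u)) := by
          rw [simple_mul_simple_cancel_left]
      _ ≤ cs.length (cs.simple c) + cs.length (cs.simple c * u) := cs.length_mul_le _ _
      _ ≤ n := by rw [length_simple]; omega

theorem length_eq_card_inversions
    (hsimple : ∀ i : Fin m, cs.simple i = swap i.castSucc i.succ) (u : Perm (Fin (m + 1))) :
    cs.length u = u.inversions.card := by
  refine (length_le_card_inversions hsimple u).antisymm ?_
  obtain ⟨ω, hω, rfl⟩ := cs.exists_isReduced u
  exact hω ▸ card_inversions_wordProd_le hsimple ω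

theorem isLeftDescent_iff_inv_apply_succ_lt
    (hsimple : ∀ i : Fin m, cs.simple i = swap i.castSucc i.succ) {u : Perm (Fin (m + 1))}
    {c : Fin m} : cs.IsLeftDescent u c ↔ u⁻¹ c.succ < u⁻¹ c.castSucc := by
  rw [IsLeftDescent, length_eq_card_inversions hsimple, length_eq_card_inversions hsimple,
    hsimple]
  rcases lt_or_gt_of_ne (u⁻¹.injective.ne (Fin.castSucc_lt_succ (i := c)).ne) with h | h
  · simp only [Perm.card_inversions_swap_mul_of_lt h, h.not_gt, iff_false]
    omega
  · have := Perm.card_inversions_swap_mul_of_gt h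
    simp only [h, iff_true]
    omega

lemma simple_mem_stabilizer_Iic
    (hsimple : ∀ i : Fin m, cs.simple i = swap i.castSucc i.succ) {i j : Fin m} (hji : j ≠ i) :
    cs.simple j ∈ stabilizer (Perm (Fin (m + 1))) (Set.Iic i.castSucc) := by
  rw [mem_stabilizer_set, hsimple]
  intro x
  have : j.1 ≠ i.1 := Fin.val_ne_of_ne hji
  simp only [Perm.smul_def, Set.mem_Iic, swap_apply_def]
  split_ifs <;>
    simp only [Fin.le_def, Fin.ext_iff, Fin.val_castSucc, Fin.val_succ] at * <;>
    omega

lemma closure_simple_compl_le_stabilizer_Iic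
    (hsimple : ∀ i : Fin m, cs.simple i = swap i.castSucc i.succ) (i : Fin m) :
    Subgroup.closure (cs.simple '' {i}ᶜ) ≤
      stabilizer (Perm (Fin (m + 1))) (Set.Iic i.castSucc) :=
  (Subgroup.closure_le _).2 <| by
    rintro _ ⟨j, hj, rfl⟩
    exact simple_mem_stabilizer_Iic hsimple hj

lemma not_isLeftDescent_of_mem_stabilizer_Iic
    (hsimple : ∀ i : Fin m, cs.simple i = swap i.castSucc i.succ) {i : Fin m}
    {u : Perm (Fin (m + 1))} (hu : u ∈ stabilizer (Perm (Fin (m + 1))) (Set.Iic i.castSucc)) :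
    ¬cs.IsLeftDescent u i := by
  have hu' := mem_stabilizer_set.1 (inv_mem hu)
  have h₁ : u⁻¹ i.castSucc ≤ i.castSucc := (hu' i.castSucc).2 (Set.mem_Iic.2 le_rfl)
  have h₂ : i.castSucc < u⁻¹ i.succ :=
    not_le.1 fun h => Fin.castSucc_lt_succ.not_ge ((hu' i.succ).1 h)
  rw [isLeftDescent_iff_inv_apply_succ_lt hsimple]
  exact (h₁.trans_lt h₂).not_gt

lemma notMem_of_isReduced_of_mem_stabilizer_Iic
    (hsimple : ∀ i : Fin m, cs.simple i = swap i.castSucc i.succ) {i : Fin m} :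
    ∀ ω : List (Fin m), cs.IsReduced ω →
      cs.wordProd ω ∈ stabilizer (Perm (Fin (m + 1))) (Set.Iic i.castSucc) → i ∉ ω
  | [], _, _ => List.not_mem_nil
  | a :: ω, hred, hu => by
    have hai : a ≠ i := by
      rintro rfl
      exact not_isLeftDescent_of_mem_stabilizer_Iic hsimple hu (cs.isLeftDescent_wordProd_cons hred)
    have hω : cs.wordProd ω ∈ stabilizer (Perm (Fin (m + 1))) (Set.Iic i.castSucc) := by
      rw [← simple_mul_simple_cancel_left cs (i := a) (w := cs.wordProd ω), ← wordProd_cons]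
      exact mul_mem (simple_mem_stabilizer_Iic hsimple hai) hu
    simpa [hai.symm] using notMem_of_isReduced_of_mem_stabilizer_Iic hsimple ω (hred.drop 1) hω

lemma notMem_supp_of_mem_closure_simple_compl
    (hsimple : ∀ i : Fin m, cs.simple i = swap i.castSucc i.succ) {i : Fin m}
    {u : Perm (Fin (m + 1))} (hu : u ∈ Subgroup.closure (cs.simple '' {i}ᶜ)) :
    i ∉ cs.supp u := by
  rintro ⟨ω, hred, rfl, hi⟩
  exact notMem_of_isReduced_of_mem_stabilizer_Iic hsimple ω hred
    (closure_simple_compl_le_stabilizer_Iic hsimple i hu) hi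

end CoxeterSystem

theorem stmt_19_general {m k : ℕ}
    (cs : CoxeterSystem (CoxeterMatrix.Aₙ m) (Equiv.Perm (Fin (m + 1))))
    (hsimple : ∀ i : Fin m, cs.simple i = Equiv.swap i.castSucc i.succ)
    (w wl : Equiv.Perm (Fin (m + 1)))
    (ws : Fin (k + 1) → Equiv.Perm (Fin (m + 1)))
    (T : Fin (k + 1) → Set (Fin m))
    -- `w_ℓ` is a product of the `k` elements of `D_L(w)`
    (hwl : ∃ ω : List (Fin m), ω.Nodup ∧ ω.length = k ∧
      (∀ i : Fin m, i ∈ ω ↔ cs.IsLeftDescent w i) ∧ wl = cs.wordProd ω)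
    -- the elements of `D_L(w)` pairwise commute
    (hDcomm : ∀ i j : Fin m, cs.IsLeftDescent w i → cs.IsLeftDescent w j →
      Commute (cs.simple i) (cs.simple j))
    -- each `w_r` lies in the parabolic subgroup generated by `T_r`
    (hmem : ∀ r : Fin (k + 1), ws r ∈ Subgroup.closure (cs.simple '' T r))
    -- `D_L(w)` and the `T_r` partition `S`
    (hdisjD : ∀ r : Fin (k + 1), Disjoint (T r) {j : Fin m | cs.IsLeftDescent w j})
    -- the factorization itself, which is length-additive
    (hw : w = wl * (List.ofFn ws).prod) :
    ∀ i : Fin m, cs.IsLeftDescent w i → cs.supp (cs.simple i * w) ≠ Set.univ := by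
  intro i hi
  obtain ⟨ω, hnd, -, hmemω, rfl⟩ := hwl
  have hcomm : ∀ j ∈ ω, ∀ j' ∈ ω, Commute (cs.simple j) (cs.simple j') :=
    fun j hj j' hj' => hDcomm j j' ((hmemω j).1 hj) ((hmemω j').1 hj')
  have hrest : (List.ofFn ws).prod ∈ Subgroup.closure (cs.simple '' {i}ᶜ) := by
    refine list_prod_mem fun u hu => ?_
    obtain ⟨r, rfl⟩ := List.mem_ofFn.1 hu
    refine Subgroup.closure_mono (Set.image_mono fun j hj => ?_) (hmem r)
    exact fun hji => Set.disjoint_left.1 (hdisjD r) hj (hji ▸ hi)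
  have herase : cs.wordProd (ω.erase i) ∈ Subgroup.closure (cs.simple '' {i}ᶜ) :=
    cs.wordProd_mem_closure_simple_image fun j hj hji => hnd.not_mem_erase (hji ▸ hj)
  have hsw : cs.simple i * w ∈ Subgroup.closure (cs.simple '' {i}ᶜ) := by
    rw [hw, cs.wordProd_eq_simple_mul_wordProd_erase ((hmemω i).2 hi) hcomm, mul_assoc,
      CoxeterSystem.simple_mul_simple_cancel_left]
    exact mul_mem herase hrest
  exact fun h =>
    CoxeterSystem.notMem_supp_of_mem_closure_simple_compl hsimple hsw (h ▸ Set.mem_univ i)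

/-- Let `w ∈ S_n` have full support and admit a length-additive factorization
`w = w_ℓ · w_1 ⋯ w_{k+1}` where `w_ℓ` is a product of the `k` pairwise-commuting
elements of `D_L(w)`, each `w_r` lies in a parabolic subgroup `W_{T_r}` with `T_r`
a set of consecutive simple reflections, and `D_L(w)` together with the `T_r`
partition `S`.  Then `Supp(sw) ≠ S` for every `s ∈ D_L(w)`. -/
theorem stmt_19 {m k : ℕ}
    (cs : CoxeterSystem (CoxeterMatrix.Aₙ m) (Equiv.Perm (Fin (m + 1))))
    (hsimple : ∀ i : Fin m, cs.simple i = Equiv.swap i.castSucc i.succ)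
    (w wl : Equiv.Perm (Fin (m + 1)))
    (ws : Fin (k + 1) → Equiv.Perm (Fin (m + 1)))
    (T : Fin (k + 1) → Set (Fin m))
    (hfull : cs.supp w = Set.univ)
    -- `w_ℓ` is a product of the `k` elements of `D_L(w)`
    (hwl : ∃ ω : List (Fin m), ω.Nodup ∧ ω.length = k ∧
      (∀ i : Fin m, i ∈ ω ↔ cs.IsLeftDescent w i) ∧ wl = cs.wordProd ω)
    -- the elements of `D_L(w)` pairwise commute
    (hDcomm : ∀ i j : Fin m, cs.IsLeftDescent w i → cs.IsLeftDescent w j →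
      Commute (cs.simple i) (cs.simple j))
    -- each `w_r` lies in the parabolic subgroup generated by `T_r`
    (hmem : ∀ r : Fin (k + 1), ws r ∈ Subgroup.closure (cs.simple '' T r))
    -- each `T_r` consists of consecutive simple reflections
    (hconsec : ∀ r : Fin (k + 1), ∃ a b : ℕ, T r = {j : Fin m | a ≤ j.1 ∧ j.1 ≤ b})
    -- `D_L(w)` and the `T_r` partition `S`
    (hdisj : ∀ r r' : Fin (k + 1), r ≠ r' → Disjoint (T r) (T r'))
    (hdisjD : ∀ r : Fin (k + 1), Disjoint (T r) {j : Fin m | cs.IsLeftDescent w j})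
    (hcover : (⋃ r : Fin (k + 1), T r) ∪ {j : Fin m | cs.IsLeftDescent w j} = Set.univ)
    -- the factorization itself, which is length-additive
    (hw : w = wl * (List.ofFn ws).prod)
    (hadd : cs.length w = cs.length wl + ∑ r : Fin (k + 1), cs.length (ws r)) :
    ∀ i : Fin m, cs.IsLeftDescent w i → cs.supp (cs.simple i * w) ≠ Set.univ :=
  stmt_19_general cs hsimple w wl ws T hwl hDcomm hmem hdisjD hw
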